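/- arXiv:1911.05467 — 2 statements merged into one kernel-verified Lean document; each statement's English description precedes it below -/
import Mathlib

section
/- There exists a constant C > 0 such that for every integer n ≥ 1 and all real numbers c₀, c₁, …, c_n, there exists a σ₂-network Φ with input dimension 1, output dimension 1, at most ⌊log₂ n⌋ + 1 hidden layers, at most C·n neurons, and at most C·n nonzero weights, whose realization satisfies R(Φ)(x) = ∑_{j=0}^{n} c_j T_j(x) for all real x. -/
open scoped Classical

noncomputable section

/-- Chebyshev polynomials of the first kind, as functions `ℝ → ℝ`:
`T 0 x = 1`, `T 1 x = x`, `T (n+2) x = 2x * T (n+1) x - T n x`. -/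
def chebT : ℕ → ℝ → ℝ
  | 0, _ => 1
  | 1, x => x
  | n + 2, x => 2 * x * chebT (n + 1) x - chebT n x

/-- Rectified power unit `σ_s(x) = max(0,x)^s`. -/
def repu (s : ℕ) (x : ℝ) : ℝ := (max 0 x) ^ s

/-- A feed-forward neural network with `L` layers: layer widths `width 0, …, width L`
(`width 0` is the input dimension, `width L` the output dimension), weight matrices
`A k` and bias vectors `b k` for `k = 1, …, L` (entries outside the relevant ranges
are irrelevant). -/
structure Net where
  L : ℕ
  width : ℕ → ℕ
  A : ℕ → ℕ → ℕ → ℝ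
  b : ℕ → ℕ → ℝ

namespace Net

/-- The state `x_k` of the network on input `x` with activation `σ`:
`x_0 = x`, `x_{k+1} = σ(A_{k+1} x_k + b_{k+1})` componentwise. -/
def fwd (σ : ℝ → ℝ) (Φ : Net) (x : ℕ → ℝ) : ℕ → ℕ → ℝ
  | 0 => x
  | k + 1 => fun i =>
      σ ((∑ j ∈ Finset.range (Φ.width k), Φ.A (k + 1) i j * Φ.fwd σ x k j) + Φ.b (k + 1) i)

/-- The realization `R(Φ)(x) = A_L x_{L-1} + b_L` (no activation on the last layer). -/
def realize (σ : ℝ → ℝ) (Φ : Net) (x : ℕ → ℝ) : ℕ → ℝ := fun i =>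
  (∑ j ∈ Finset.range (Φ.width (Φ.L - 1)), Φ.A Φ.L i j * Φ.fwd σ x (Φ.L - 1) j) + Φ.b Φ.L i

/-- Number of hidden layers. -/
def hiddenLayers (Φ : Net) : ℕ := Φ.L - 1

/-- Number of neurons (activation functions): total width of the hidden layers. -/
def neurons (Φ : Net) : ℕ := ∑ k ∈ Finset.Ico 1 Φ.L, Φ.width k

/-- Number of nonzero weights: nonzero entries of all the `A_k` and `b_k`. -/
def nonzeroWeights (Φ : Net) : ℕ :=
  ∑ k ∈ Finset.Icc 1 Φ.L,
    ((((Finset.range (Φ.width k)) ×ˢ (Finset.range (Φ.width (k - 1)))).filter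
        (fun p => Φ.A k p.1 p.2 ≠ 0)).card
      + ((Finset.range (Φ.width k)).filter (fun i => Φ.b k i ≠ 0)).card)

end Net

/-!
A hidden layer of width `8(m + 1)` stores `T_0(x), …, T_m(x)` as affine readouts of blocks of
eight σ₂-neurons. Since `σ₂(z) + σ₂(-z) = z²`, a block can square four affine readouts of the
previous layer, and by polarization it then yields `2 T_p T_q - T_{p-q} = T_{p+q}` (for `q ≤ p`).
Taking `q = 0` passes a degree through, taking `p = ⌈j/2⌉, q = ⌊j/2⌋` reaches `T_j` for
`j ≤ 2^(k+1)`, so after `⌊log₂ n⌋ + 1` layers all of `T_0, …, T_n` are available and the output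
layer takes their linear combination. The widths grow geometrically up to `8(n + 1)`, so neurons
and nonzero weights (at most 24 per row) are `O(n)`.
-/

open Polynomial in
theorem chebT_eq_eval (n : ℕ) (x : ℝ) : chebT n x = (Chebyshev.T ℝ n).eval x := by
  induction n using Nat.strong_induction_on with
  | _ n ih =>
    match n with
    | 0 => simp [chebT]
    | 1 => simp [chebT]
    | n + 2 =>
      have h := Chebyshev.T_add_two ℝ n
      push_cast at h ⊢
      rw [chebT, ih (n + 1) (by omega), ih n (by omega), h]
      simp

theorem two_mul_chebT_mul_chebT {p q : ℕ} (hqp : q ≤ p) (x : ℝ) :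
    2 * chebT p x * chebT q x = chebT (p + q) x + chebT (p - q) x := by
  have h := congrArg (Polynomial.eval x) (Polynomial.Chebyshev.T_mul_T ℝ p q)
  simp only [Polynomial.eval_mul, Polynomial.eval_add, Polynomial.eval_ofNat] at h
  rw [chebT_eq_eval, chebT_eq_eval, chebT_eq_eval, chebT_eq_eval, Nat.cast_sub hqp]
  push_cast
  exact h

theorem repu_two_add_repu_two_neg (z : ℝ) : repu 2 z + repu 2 (-z) = z ^ 2 := by
  rcases le_total 0 z with h | h
  · simp [repu, max_eq_right h, max_eq_left (neg_nonpos.mpr h)]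
  · simp [repu, max_eq_left h, max_eq_right (neg_nonneg.mpr h)]

theorem Finset.card_filter_product_le {α β : Type*} (s : Finset α) (t : Finset β)
    (P : α → β → Prop) [∀ a b, Decidable (P a b)] {r : ℕ}
    (h : ∀ a ∈ s, (t.filter (P a)).card ≤ r) :
    ((s ×ˢ t).filter (fun p => P p.1 p.2)).card ≤ s.card * r := by
  rw [Finset.card_filter, Finset.sum_product, Finset.card_eq_sum_ones s, Finset.sum_mul]
  refine Finset.sum_le_sum fun a ha => ?_
  rw [one_mul, ← Finset.card_filter]
  exact h a ha

namespace Net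

theorem nonzeroWeights_le (Φ : Net) (r : ℕ → ℕ)
    (h : ∀ k ∈ Finset.Icc 1 Φ.L, ∀ i < Φ.width k,
      ((Finset.range (Φ.width (k - 1))).filter (fun j => Φ.A k i j ≠ 0)).card ≤ r k) :
    Φ.nonzeroWeights ≤ ∑ k ∈ Finset.Icc 1 Φ.L, Φ.width k * (r k + 1) := by
  refine Finset.sum_le_sum fun k hk => ?_
  have hA := Finset.card_filter_product_le _ _ (fun i j => Φ.A k i j ≠ 0)
    fun i hi => h k hk i (Finset.mem_range.mp hi)
  have hb := Finset.card_filter_le (Finset.range (Φ.width k)) (fun i => Φ.b k i ≠ 0)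
  rw [Finset.card_range] at hA hb
  rw [mul_add_one]
  exact add_le_add hA hb

end Net

section SquareGadget

variable {M N F : Type*} [AddGroup M] [AddGroup N] [FunLike F M N] [AddMonoidHomClass F M N]

def blockArg (t : ℕ) (u v w e : M) : M :=
  match t with
  | 0 => u + v | 1 => -(u + v) | 2 => u - v | 3 => -(u - v)
  | 4 => w + e | 5 => -(w + e) | 6 => w - e | 7 => -(w - e)
  | _ => 0

def blockWeight : ℕ → ℝ
  | 0 | 1 => 1 / 2 | 2 | 3 => -1 / 2 | 4 | 5 => -1 / 4 | 6 | 7 => 1 / 4 | _ => 0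

theorem map_blockArg (φ : F) (t : ℕ) (u v w e : M) :
    φ (blockArg t u v w e) = blockArg t (φ u) (φ v) (φ w) (φ e) := by
  rcases t with _ | _ | _ | _ | _ | _ | _ | _ | t <;> simp [blockArg]

theorem blockArg_zero (t : ℕ) : blockArg t (0 : M) 0 0 0 = 0 := by
  rcases t with _ | _ | _ | _ | _ | _ | _ | _ | t <;> simp [blockArg]

/-- Since `σ₂(z) + σ₂(-z) = z²`, the block evaluates
`((u + v)² - (u - v)²) / 2 - ((w + 1)² - (w - 1)²) / 4`. -/
theorem sum_blockWeight_mul_repu (u v w : ℝ) :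
    ∑ t ∈ Finset.range 8, blockWeight t * repu 2 (blockArg t u v w 1) = 2 * u * v - w := by
  simp only [Finset.sum_range_succ, Finset.sum_range_zero, blockWeight, blockArg]
  linear_combination (1 / 2 : ℝ) * repu_two_add_repu_two_neg (u + v)
    - (1 / 2 : ℝ) * repu_two_add_repu_two_neg (u - v)
    - (1 / 4 : ℝ) * repu_two_add_repu_two_neg (w + 1)
    + (1 / 4 : ℝ) * repu_two_add_repu_two_neg (w - 1)

end SquareGadget

theorem sum_range_ite_div_mul {b j W : ℕ} (hb : 0 < b) (hW : b * j + b ≤ W) (w f : ℕ → ℝ) :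
    ∑ i ∈ Finset.range W, (if i / b = j then w (i % b) else 0) * f i
      = ∑ t ∈ Finset.range b, w t * f (b * j + t) := by
  rw [← Finset.sum_subset (s₁ := Finset.Ico (b * j) (b * j + b)), Finset.sum_Ico_eq_sum_range,
    Nat.add_sub_cancel_left]
  · refine Finset.sum_congr rfl fun t ht => ?_
    have ht : t < b := Finset.mem_range.mp ht
    rw [if_pos (by simp [Nat.mul_add_div hb, Nat.div_eq_of_lt ht]), Nat.mul_add_mod,
      Nat.mod_eq_of_lt ht]
  · intro i hi
    simp only [Finset.mem_Ico, Finset.mem_range] at hi ⊢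
    omega
  · intro i _ hi
    simp only [Finset.mem_Ico, not_and, not_lt] at hi
    rw [if_neg, zero_mul]
    rintro rfl
    have := Nat.mul_div_le i b
    have := Nat.lt_mul_div_succ i hb
    rw [Nat.mul_add_one] at this
    omega

/-- Affine functionals on a layer of width `W` are encoded as pairs `(weights, bias)`. -/
def affineEval (W : ℕ) (f : ℕ → ℝ) : (ℕ → ℝ) × ℝ →ₗ[ℝ] ℝ where
  toFun p := ∑ i ∈ Finset.range W, p.1 i * f i + p.2
  map_add' p q := by simp only [Prod.fst_add, Prod.snd_add, Pi.add_apply, add_mul,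
    Finset.sum_add_distrib]; ring
  map_smul' r p := by simp only [Prod.smul_fst, Prod.smul_snd, Pi.smul_apply, smul_eq_mul,
    mul_assoc, ← Finset.mul_sum, RingHom.id_apply]; ring

@[simp]
theorem affineEval_apply (W : ℕ) (f : ℕ → ℝ) (p : (ℕ → ℝ) × ℝ) :
    affineEval W f p = ∑ i ∈ Finset.range W, p.1 i * f i + p.2 := rfl

namespace ChebNet

variable (n : ℕ) (c : ℕ → ℝ)

def depth : ℕ := Nat.log 2 n + 1

def degreeAt (k : ℕ) : ℕ := min (2 ^ k) n

def width (k : ℕ) : ℕ := if k = 0 ∨ depth n < k then 1 else 8 * (degreeAt n k + 1)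

def readout : ℕ → ℕ → (ℕ → ℝ) × ℝ
  | 0, j => (fun i => if j = 1 ∧ i = 0 then 1 else 0, if j = 0 then 1 else 0)
  | _ + 1, j => (fun i => if i / 8 = j then blockWeight (i % 8) else 0, 0)

def lowFactor (k j : ℕ) : ℕ := if j ≤ degreeAt n k then 0 else j / 2

def preact (k i : ℕ) : (ℕ → ℝ) × ℝ :=
  let q := lowFactor n k (i / 8)
  let p := i / 8 - q
  blockArg (i % 8) (readout k p) (readout k q) (readout k (p - q)) (0, 1)

def output : (ℕ → ℝ) × ℝ := ∑ j ∈ Finset.range (n + 1), c j • readout (depth n) j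

def layer (k i : ℕ) : (ℕ → ℝ) × ℝ := if k ≤ depth n then preact n (k - 1) i else output n c

def net : Net :=
  ⟨depth n + 1, width n, fun k i => (layer n c k i).1, fun k i => (layer n c k i).2⟩

theorem fwd_net_succ (x : ℕ → ℝ) (k i : ℕ) :
    (net n c).fwd (repu 2) x (k + 1) i
      = repu 2 (affineEval (width n k) ((net n c).fwd (repu 2) x k) (layer n c (k + 1) i)) :=
  rfl

theorem degreeAt_depth : degreeAt n (depth n) = n :=
  min_eq_right (Nat.lt_pow_succ_log_self one_lt_two n).le

theorem width_of_pos_of_le {k : ℕ} (hk : 0 < k) (hkd : k ≤ depth n) :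
    width n k = 8 * (degreeAt n k + 1) :=
  if_neg (by omega)

theorem width_depth_add_one : width n (depth n + 1) = 1 :=
  if_pos (Or.inr (Nat.lt_succ_self _))

variable {n} in
theorem lowFactor_le {k j : ℕ} (hj : j ≤ degreeAt n (k + 1)) :
    lowFactor n k j ≤ j - lowFactor n k j ∧ j - lowFactor n k j ≤ degreeAt n k := by
  unfold lowFactor degreeAt at *
  rw [pow_succ] at hj
  split_ifs <;> omega

theorem affineEval_readout (x : ℝ) :
    ∀ k ≤ depth n, ∀ j ≤ degreeAt n k,
      affineEval (width n k) ((net n c).fwd (repu 2) (fun _ => x) k) (readout k j)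
        = chebT j x := by
  intro k
  induction k with
  | zero =>
    intro _ j hj
    have hj : j ≤ 1 := hj.trans (min_le_left _ _)
    interval_cases j <;> simp [width, readout, chebT, Net.fwd]
  | succ k ih =>
    intro hk j hj
    obtain ⟨hqp, hpk⟩ := lowFactor_le hj
    set q := lowFactor n k j
    set p := j - q
    have hblock : ∀ t ∈ Finset.range 8,
        (net n c).fwd (repu 2) (fun _ => x) (k + 1) (8 * j + t)
          = repu 2 (blockArg t (chebT p x) (chebT q x) (chebT (p - q) x) 1) := by
      intro t ht
      have ht : t < 8 := Finset.mem_range.mp ht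
      have hdiv : (8 * j + t) / 8 = j := by omega
      have hmod : (8 * j + t) % 8 = t := by omega
      rw [fwd_net_succ, layer, if_pos hk, Nat.add_sub_cancel, preact, hdiv, hmod, map_blockArg,
        ih (by omega) p hpk, ih (by omega) q (by omega), ih (by omega) (p - q) (by omega)]
      simp
    have hwidth : 8 * j + 8 ≤ width n (k + 1) := by
      rw [width_of_pos_of_le n (by omega) hk]
      omega
    calc affineEval (width n (k + 1)) ((net n c).fwd (repu 2) (fun _ => x) (k + 1))
          (readout (k + 1) j)
        = ∑ t ∈ Finset.range 8,
            blockWeight t * (net n c).fwd (repu 2) (fun _ => x) (k + 1) (8 * j + t) := by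
          simpa [readout] using sum_range_ite_div_mul (by norm_num) hwidth _ _
      _ = 2 * chebT p x * chebT q x - chebT (p - q) x := by
          rw [Finset.sum_congr rfl fun t ht => by rw [hblock t ht], sum_blockWeight_mul_repu]
      _ = chebT j x := by
          rw [two_mul_chebT_mul_chebT hqp, Nat.sub_add_cancel (by omega : q ≤ j)]
          ring

theorem realize_net (x : ℝ) :
    (net n c).realize (repu 2) (fun _ => x) 0 = ∑ j ∈ Finset.range (n + 1), c j * chebT j x := by
  change affineEval (width n (depth n)) ((net n c).fwd (repu 2) (fun _ => x) (depth n))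
    (layer n c (depth n + 1) 0) = _
  rw [layer, if_neg (by omega), output, map_sum]
  refine Finset.sum_congr rfl fun j hj => ?_
  rw [map_smul, smul_eq_mul, affineEval_readout n c x _ le_rfl j
    ((Finset.mem_range_succ_iff.mp hj).trans (degreeAt_depth n).ge)]

theorem neurons_net_le (hn : n ≠ 0) : (net n c).neurons ≤ 40 * n := by
  have hgeom : ∑ k ∈ Finset.Ico 1 (depth n + 1), 2 ^ k < 2 ^ (depth n + 1) :=
    Nat.geomSum_lt le_rfl fun k hk => (Finset.mem_Ico.mp hk).2
  have hpow : 2 ^ (depth n + 1) ≤ 4 * n := by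
    have := Nat.pow_log_le_self 2 hn
    rw [depth, pow_succ, pow_succ]
    omega
  have hdepth : depth n ≤ n := Nat.log_lt_self 2 hn
  calc (net n c).neurons = ∑ k ∈ Finset.Ico 1 (depth n + 1), width n k := rfl
    _ ≤ ∑ k ∈ Finset.Ico 1 (depth n + 1), (8 * 2 ^ k + 8) := by
      refine Finset.sum_le_sum fun k hk => ?_
      obtain ⟨hk1, hk2⟩ := Finset.mem_Ico.mp hk
      rw [width_of_pos_of_le n hk1 (by omega), degreeAt]
      have := min_le_left (2 ^ k) n
      omega
    _ = 8 * ∑ k ∈ Finset.Ico 1 (depth n + 1), 2 ^ k + 8 * depth n := by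
      rw [Finset.sum_add_distrib, ← Finset.mul_sum, Finset.sum_const, Nat.card_Ico, smul_eq_mul,
        Nat.add_sub_cancel]
      ring
    _ ≤ 40 * n := by omega

theorem card_filter_preact_ne_zero_le (k i W : ℕ) :
    ((Finset.range W).filter (fun i' => (preact n (k + 1) i).1 i' ≠ 0)).card ≤ 24 := by
  set q := lowFactor n (k + 1) (i / 8)
  set p := i / 8 - q
  have hsub : (Finset.range W).filter (fun i' => (preact n (k + 1) i).1 i' ≠ 0)
      ⊆ ({p, q, p - q} : Finset ℕ).biUnion fun a => Finset.Ico (8 * a) (8 * a + 8) := by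
    intro i' hi'
    simp only [Finset.mem_filter] at hi'
    simp only [Finset.mem_biUnion, Finset.mem_insert, Finset.mem_singleton, Finset.mem_Ico]
    by_contra hout
    apply hi'.2
    have hzero : ∀ a ∈ ({p, q, p - q} : Finset ℕ), (readout (k + 1) a).1 i' = 0 := by
      intro a ha
      simp only [readout, ite_eq_right_iff]
      intro h
      exact (hout ⟨a, by simpa using ha, by omega, by omega⟩).elim
    have := map_blockArg ((Pi.evalAddMonoidHom (fun _ => ℝ) i').comp (AddMonoidHom.fst _ _))
      (i % 8) (readout (k + 1) p) (readout (k + 1) q) (readout (k + 1) (p - q)) (0, 1)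
    simp only [AddMonoidHom.coe_comp, Function.comp_apply, AddMonoidHom.coe_fst,
      Pi.evalAddMonoidHom_apply] at this
    rw [preact, this, hzero p (by simp), hzero q (by simp), hzero (p - q) (by simp)]
    exact blockArg_zero _
  calc _ ≤ _ := Finset.card_le_card hsub
    _ ≤ ({p, q, p - q} : Finset ℕ).card * 8 :=
      Finset.card_biUnion_le_card_mul _ _ _ fun a _ => by simp
    _ ≤ 24 := by have := Finset.card_le_three (a := p) (b := q) (c := p - q); omega

theorem nonzeroWeights_net_le :
    (net n c).nonzeroWeights ≤ 25 * (net n c).neurons + 8 * (n + 1) + 1 := by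
  have hrows : ∀ k ∈ Finset.Icc 1 (net n c).L, ∀ i < (net n c).width k,
      ((Finset.range ((net n c).width (k - 1))).filter (fun j => (net n c).A k i j ≠ 0)).card
        ≤ if k ≤ depth n then 24 else width n (depth n) := by
    intro k hk i _
    obtain ⟨hk1, hk2⟩ := Finset.mem_Icc.mp hk
    have hrow := (Finset.card_filter_le (Finset.range (width n (k - 1)))
      fun j => (net n c).A k i j ≠ 0).trans_eq (Finset.card_range _)
    split_ifs with hkd
    · obtain rfl | ⟨k, rfl⟩ : k = 1 ∨ ∃ k', k = k' + 2 := by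
        rcases Nat.lt_or_ge k 2 with h | h
        exacts [.inl (by omega), .inr ⟨k - 2, by omega⟩]
      · exact hrow.trans (by simp [width])
      · have hA : (net n c).A (k + 2) i = (preact n (k + 1) i).1 := by simp [net, layer, hkd]
        rw [hA]
        exact card_filter_preact_ne_zero_le n k i _
    · obtain rfl : k = depth n + 1 := le_antisymm hk2 (not_le.mp hkd)
      exact hrow
  have hlast : width n (depth n) = 8 * (n + 1) := by
    rw [width_of_pos_of_le n (k := depth n) (Nat.succ_pos _) le_rfl, degreeAt_depth]
  calc (net n c).nonzeroWeights
      ≤ ∑ k ∈ Finset.Icc 1 (depth n + 1),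
          width n k * ((if k ≤ depth n then 24 else width n (depth n)) + 1) :=
        Net.nonzeroWeights_le _ _ hrows
    _ = ∑ k ∈ Finset.Icc 1 (depth n), width n k * 25 + 1 * (8 * (n + 1) + 1) := by
        rw [Finset.sum_Icc_succ_top (by omega), if_neg (by omega), width_depth_add_one, hlast]
        congr 1
        exact Finset.sum_congr rfl fun k hk => by rw [if_pos (Finset.mem_Icc.mp hk).2]
    _ = 25 * (net n c).neurons + 8 * (n + 1) + 1 := by
        rw [← Finset.sum_mul, mul_comm, one_mul, add_assoc]
        rfl

end ChebNet

/-- any Chebyshev expansion of degree `n` is realized exactly by a σ₂-network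
with at most `⌊log₂ n⌋ + 1` hidden layers and `O(n)` neurons and nonzero weights. -/
theorem stmt_5 :
    ∃ C : ℕ, 0 < C ∧
      ∀ n : ℕ, 1 ≤ n → ∀ c : ℕ → ℝ,
        ∃ Φ : Net,
          1 ≤ Φ.L ∧
          Φ.width 0 = 1 ∧
          Φ.width Φ.L = 1 ∧
          Φ.hiddenLayers ≤ Nat.log 2 n + 1 ∧
          Φ.neurons ≤ C * n ∧
          Φ.nonzeroWeights ≤ C * n ∧
          ∀ x : ℝ, Φ.realize (repu 2) (fun _ => x) 0 =
            ∑ j ∈ Finset.range (n + 1), c j * chebT j x := by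
  refine ⟨25 * 40 + 17, by norm_num, fun n hn c => ?_⟩
  have hneurons := ChebNet.neurons_net_le n c (by omega)
  have hweights := ChebNet.nonzeroWeights_net_le n c
  exact ⟨ChebNet.net n c, Nat.le_add_left _ _, rfl, ChebNet.width_depth_add_one n, le_rfl,
    by omega, by omega, ChebNet.realize_net n c⟩
end
end

section
/- Let s ≥ 2 and k ≥ 0 be integers and let b₀, b₁, …, b_{s^{k+1}−1} be real numbers. For l = 0, 1, …, s − 1 define Ã_{l,0} = b_{l·s^k}, and for j = 1, …, s^k − 1 define Ã_{l,j} = (2 − δ_{l0}) · ∑_{r=l}^{s−1} ( δ⁻_{r−l} · b_{r·s^k + j} − δ⁺_{r−l} · b_{(r+1)·s^k − j} ), where δ_{l0} is the Kronecker delta. Then for all real x, ∑_{j=0}^{s^{k+1}−1} b_j T_j(x) = ∑_{l=0}^{s−1} ( ∑_{j=0}^{s^k−1} Ã_{l,j} T_j(x) ) · T_l( T_{s^k}(x) ). -/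
/-! Put `m = s ^ k` and `y = T_m(x)`. The product formula `2 T_a T_b = T_{a+b} + T_{a-b}`, valid for
all integer indices, gives `T_{(r+2)m+t} = 2 T_t T_{r+2}(y) - 2 T_{m-t} T_{r+1}(y) + T_{rm+t}`, so by
induction on `r`
`T_{rm+t} = ∑_{l ≤ r} (2 - δ_{l0}) (δ⁻_{r-l} T_t - δ⁺_{r-l} T_{m-t}) T_l(y)`, while `T_{rm} = T_r(y)`.
Substituting this for every `j = rm + t` of the expansion, exchanging the sums over `r` and `l`, and
reflecting `t ↦ m - t` in the `T_{m-t}` terms produces exactly the coefficients `Ã_{l,j}`. -/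


open scoped Classical

noncomputable section

/-- `δ⁻_r = (1 + (-1)^r)/2`: equals 1 if `r` is even, 0 if `r` is odd. -/
def deltaM (r : ℕ) : ℝ := (1 + (-1 : ℝ) ^ r) / 2

/-- `δ⁺_r = (1 - (-1)^r)/2`: equals 1 if `r` is odd, 0 if `r` is even. -/
def deltaP (r : ℕ) : ℝ := (1 - (-1 : ℝ) ^ r) / 2

/-- The coefficients `Ã_{l,j}` of Lemma on Chebyshev decomposition. -/
def Atilde (s k : ℕ) (b : ℕ → ℝ) (l j : ℕ) : ℝ :=
  if j = 0 then b (l * s ^ k)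
  else (2 - if l = 0 then (1 : ℝ) else 0) *
    ∑ r ∈ Finset.Icc l (s - 1),
      (deltaM (r - l) * b (r * s ^ k + j) - deltaP (r - l) * b ((r + 1) * s ^ k - j))


open Finset Polynomial

namespace Polynomial.Chebyshev

variable {R : Type*} [CommRing R]

theorem T_mul_add_eq_sum (m t : ℤ) : ∀ r : ℕ,
    T R (r * m + t) = ∑ l ∈ range (r + 1), (2 - if l = 0 then 1 else 0 : R[X]) *
      (if Even (r - l) then T R t else -T R (m - t)) * (T R l).comp (T R m)
  | 0 => by norm_num
  | 1 => by
      have h := T_mul_T R m t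
      simp only [sum_range_succ, range_one, sum_singleton, Nat.cast_one, one_mul, mul_one,
        Nat.reduceAdd, tsub_zero, tsub_self, Even.zero, Nat.not_even_one, ↓reduceIte,
        CharP.cast_eq_zero, one_ne_zero, sub_zero, T_zero, T_one, one_comp, X_comp]
      linear_combination (-1 : R[X]) * h
  | r + 2 => by
      have h₁ : 2 * T R ((r + 2 : ℕ) * m) * T R t
          = T R ((r + 2 : ℕ) * m + t) + T R ((r + 2 : ℕ) * m - t) := T_mul_T R _ _
      have h₂ : 2 * T R ((r + 1 : ℕ) * m) * T R (m - t)
          = T R ((r + 2 : ℕ) * m - t) + T R (r * m + t) := by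
        convert T_mul_T R _ _ using 3 <;> push_cast <;> ring
      have hpar : ∀ l ∈ range (r + 1), Even (r + 2 - l) ↔ Even (r - l) := by
        intro l hl
        rw [show r + 2 - l = r - l + 2 by grind, Nat.even_add]
        simp
      rw [sum_range_succ, sum_range_succ,
        sum_congr rfl fun l hl => by rw [if_congr (hpar l hl) rfl rfl], ← T_mul_add_eq_sum m t r,
        ← T_mul, ← T_mul]
      push_cast at h₁ h₂ ⊢
      simp only [add_tsub_cancel_left, tsub_self, Even.zero, Nat.not_even_one, ↓reduceIte,
        sub_zero]
      linear_combination h₂ - h₁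

end Polynomial.Chebyshev

theorem Finset.sum_range_mul_eq_sum_sum {M : Type*} [AddCommMonoid M] (f : ℕ → M) (s m : ℕ) :
    ∑ j ∈ range (s * m), f j = ∑ r ∈ range s, ∑ t ∈ range m, f (r * m + t) := by
  induction s with
  | zero => simp
  | succ s ih => rw [add_mul, one_mul, sum_range_add, ih, sum_range_succ]

theorem Finset.sum_Ico_one_ite_mul_reflect {M : Type*} [Ring M] (b f : ℕ → M) (m r : ℕ)
    (p : Prop) [Decidable p] :
    ∑ j ∈ Ico 1 m, (if p then b (r * m + j) else -b ((r + 1) * m - j)) * f j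
      = ∑ t ∈ Ico 1 m, b (r * m + t) * (if p then f t else -f (m - t)) := by
  split_ifs
  · rfl
  · simp only [neg_mul, mul_neg, sum_neg_distrib, neg_inj]
    have h := sum_Ico_reflect (fun t => b (r * m + t) * f (m - t)) 1 m.le_succ
    rw [Nat.add_sub_cancel, Nat.add_sub_cancel_left] at h
    rw [← h]
    refine sum_congr rfl fun j hj => ?_
    rw [mem_Ico] at hj
    rw [Nat.sub_sub_self (by omega), show r * m + (m - j) = (r + 1) * m - j by
      rw [add_one_mul]; omega]

theorem chebT_eq_eval_T : ∀ (n : ℕ) (x : ℝ), chebT n x = (Chebyshev.T ℝ n).eval x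
  | 0, x => by simp [chebT]
  | 1, x => by simp [chebT]
  | n + 2, x => by
    rw [chebT, chebT_eq_eval_T (n + 1), chebT_eq_eval_T n]
    push_cast
    rw [Chebyshev.T_add_two]
    simp

theorem chebT_mul (r m : ℕ) (x : ℝ) : chebT (r * m) x = chebT r (chebT m x) := by
  simp only [chebT_eq_eval_T, Nat.cast_mul, Chebyshev.T_mul, eval_comp]

theorem chebT_mul_add {m t : ℕ} (ht : t ≤ m) (r : ℕ) (x : ℝ) :
    chebT (r * m + t) x = ∑ l ∈ range (r + 1), (2 - if l = 0 then 1 else 0 : ℝ) *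
      (if Even (r - l) then chebT t x else -chebT (m - t) x) * chebT l (chebT m x) := by
  have := congrArg (eval x) (Chebyshev.T_mul_add_eq_sum (R := ℝ) m t r)
  simp only [chebT_eq_eval_T, Nat.cast_add, Nat.cast_mul, Nat.cast_sub ht, this,
    eval_finsetSum, eval_mul, eval_comp, apply_ite (eval x), eval_neg, eval_sub, eval_ofNat,
    eval_one, eval_zero]

theorem deltaM_mul_sub_deltaP_mul (n : ℕ) (a c : ℝ) :
    deltaM n * a - deltaP n * c = if Even n then a else -c := by
  rcases n.even_or_odd with h | h <;>
    simp [deltaM, deltaP, h.neg_one_pow, h, Nat.not_even_iff_odd.mpr]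

theorem sum_mul_chebT_eq_sum_chebT_comp (b : ℕ → ℝ) {m : ℕ} (hm : 0 < m) (s : ℕ) (x : ℝ) :
    ∑ j ∈ range (s * m), b j * chebT j x =
      ∑ l ∈ range s, (b (l * m) + ∑ j ∈ Ico 1 m, (2 - if l = 0 then 1 else 0) *
        (∑ r ∈ Icc l (s - 1), if Even (r - l) then b (r * m + j) else -b ((r + 1) * m - j)) *
          chebT j x) * chebT l (chebT m x) := by
  set c : ℕ → ℝ := fun l => 2 - if l = 0 then 1 else 0
  set P : ℕ → ℝ := fun l => chebT l (chebT m x)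
  set e : ℕ → ℕ → ℕ → ℝ := fun r l t => if Even (r - l) then chebT t x else -chebT (m - t) x
  calc ∑ j ∈ range (s * m), b j * chebT j x
      = ∑ r ∈ range s, (b (r * m) * P r + ∑ l ∈ range (r + 1),
          c l * (∑ t ∈ Ico 1 m, b (r * m + t) * e r l t) * P l) := by
        rw [sum_range_mul_eq_sum_sum]
        refine sum_congr rfl fun r _ => ?_
        rw [range_eq_Ico, sum_eq_sum_Ico_succ_bot hm, add_zero, chebT_mul]
        simp_rw [mul_sum, sum_mul]
        conv_rhs => rw [sum_comm]
        congr 1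
        refine sum_congr rfl fun t ht => ?_
        rw [chebT_mul_add (mem_Ico.1 ht).2.le, mul_sum]
        exact sum_congr rfl fun l _ => by ring
    _ = ∑ l ∈ range s, (b (l * m) * P l + ∑ r ∈ Icc l (s - 1),
          c l * (∑ t ∈ Ico 1 m, b (r * m + t) * e r l t) * P l) := by
        rw [sum_add_distrib, sum_add_distrib, sum_comm']
        grind
    _ = _ := by
        refine sum_congr rfl fun l _ => ?_
        rw [← sum_mul, ← mul_sum, ← add_mul]
        congr 2
        simp_rw [mul_assoc, sum_mul, ← mul_sum]
        conv_rhs => rw [sum_comm]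
        exact congrArg _ (sum_congr rfl fun r _ => (sum_Ico_one_ite_mul_reflect _ _ m r _).symm)

/-- decomposition of a Chebyshev expansion of degree `s^{k+1}-1` in terms of
`T_l(T_{s^k}(x))`, `l = 0, …, s-1`. -/
theorem stmt_13 (s : ℕ) (hs : 2 ≤ s) (k : ℕ) (b : ℕ → ℝ) (x : ℝ) :
    ∑ j ∈ Finset.range (s ^ (k + 1)), b j * chebT j x =
      ∑ l ∈ Finset.range s,
        (∑ j ∈ Finset.range (s ^ k), Atilde s k b l j * chebT j x)
          * chebT l (chebT (s ^ k) x) := by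
  have hm : 0 < s ^ k := pow_pos (by omega) k
  rw [pow_succ', sum_mul_chebT_eq_sum_chebT_comp b hm]
  refine sum_congr rfl fun l _ => ?_
  rw [range_eq_Ico, sum_eq_sum_Ico_succ_bot hm]
  congr 2
  · simp [Atilde, chebT]
  · refine sum_congr rfl fun j hj => ?_
    simp_rw [Atilde, if_neg (Nat.one_le_iff_ne_zero.1 (mem_Ico.1 hj).1), deltaM_mul_sub_deltaP_mul]
end
end
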